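/- Let f(x) = 2πx²(2πx² − 3)e^{-πx²}. For every nonzero real y, the sum ∑_{n ∈ ℤ, n ≠ 0} f(yn) is nonnegative. -/

import Mathlib

/-!
The function `f x = (4π²x⁴ - 6πx²) e^{-πx²}` is `G⁗ / (4π²) + 3 G'' / (2π)` for the Gaussian
`G x = e^{-πx²}`. Since `𝓕 G = G` and `𝓕 (h') ξ = 2πiξ 𝓕 h ξ`, this makes `f` its own Fourier
transform, and Poisson summation gives `∑ f (y n) = |y|⁻¹ ∑ f (n / y)`. So we may assume `|y| ≥ 1`,
where every term `f (y n)` is nonnegative: `f 0 = 0` and `f ≥ 0` on `|x| ≥ 1` as `2πx² ≥ 2π > 3`.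
-/

open Real Polynomial MeasureTheory Filter Asymptotics
open scoped FourierTransform

noncomputable section

section PolyGaussian

def polyGaussian (p : ℝ[X]) (x : ℝ) : ℝ := p.eval x * rexp (-(π * x ^ 2))

def polyGaussianDeriv (p : ℝ[X]) : ℝ[X] := derivative p - C (2 * π) * X * p

theorem hasDerivAt_polyGaussian (p : ℝ[X]) (x : ℝ) :
    HasDerivAt (polyGaussian p) (polyGaussian (polyGaussianDeriv p) x) x := by
  have hexp : HasDerivAt (fun x => rexp (-(π * x ^ 2)))
      (rexp (-(π * x ^ 2)) * -(π * (2 * x))) x := by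
    simpa using ((hasDerivAt_pow 2 x).const_mul π).neg.exp
  refine ((p.hasDerivAt x).mul hexp).congr_deriv ?_
  simp only [polyGaussian, polyGaussianDeriv, eval_sub, eval_mul, eval_C, eval_X]
  ring

theorem continuous_polyGaussian (p : ℝ[X]) : Continuous (polyGaussian p) :=
  continuous_iff_continuousAt.mpr fun x => (hasDerivAt_polyGaussian p x).continuousAt

theorem polyGaussian_add (p q : ℝ[X]) :
    polyGaussian (p + q) = polyGaussian p + polyGaussian q := by
  ext x
  simp only [polyGaussian, eval_add, Pi.add_apply]
  ring

theorem polyGaussian_monomial (n : ℕ) (a : ℝ) :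
    polyGaussian (monomial n a) = fun x => a * (x ^ n * rexp (-π * x ^ 2)) := by
  ext x
  simp only [polyGaussian, eval_monomial, neg_mul]
  ring

theorem isBigO_polyGaussian (p : ℝ[X]) (s : ℝ) :
    polyGaussian p =O[cocompact ℝ] (|·| ^ s) := by
  induction p using Polynomial.induction_on' with
  | add p q hp hq => rw [polyGaussian_add]; exact hp.add hq
  | monomial n a =>
    rw [polyGaussian_monomial]
    refine IsBigO.const_mul_left ?_ a
    have hdecay :=
      ((tendsto_rpow_abs_mul_exp_neg_mul_sq_cocompact pi_pos (n - s)).isBigO_one ℝ).mul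
        (isBigO_refl (|·| ^ s) (cocompact ℝ))
    refine isBigO_norm_left.mp (hdecay.congr' ?_ (by simp))
    filter_upwards [(hasBasis_cocompact.eventually_iff).mpr
      ⟨{0}, isCompact_singleton, fun x hx => hx⟩] with x hx
    rw [norm_mul, norm_pow, Real.norm_eq_abs, Real.norm_eq_abs, abs_of_pos (exp_pos _),
      mul_right_comm, ← rpow_add (abs_pos.mpr hx), sub_add_cancel, rpow_natCast]

theorem integrable_polyGaussian (p : ℝ[X]) : Integrable (polyGaussian p) := by
  induction p using Polynomial.induction_on' with
  | add p q hp hq => rw [polyGaussian_add]; exact hp.add hq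
  | monomial n a =>
    rw [polyGaussian_monomial]
    refine Integrable.const_mul ?_ a
    simpa only [rpow_natCast] using
      integrable_rpow_mul_exp_neg_mul_sq pi_pos (s := n) (by linarith [n.cast_nonneg (α := ℝ)])

end PolyGaussian

section Fourier

variable {V E : Type*} [NormedAddCommGroup V] [InnerProductSpace ℝ V] [FiniteDimensional ℝ V]
  [MeasurableSpace V] [BorelSpace V] [NormedAddCommGroup E] [NormedSpace ℂ E]

theorem fourier_add_of_integrable {f g : V → E} (hf : Integrable f) (hg : Integrable g) :
    𝓕 (f + g) = 𝓕 f + 𝓕 g :=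
  VectorFourier.fourierIntegral_add Real.continuous_fourierChar continuous_inner hf hg

theorem fourier_const_smul (c : ℂ) (f : V → E) : 𝓕 (c • f) = c • 𝓕 f :=
  VectorFourier.fourierIntegral_const_smul _ _ _ f c

end Fourier

section SelfDual

theorem fourier_ofReal_polyGaussianDeriv (p : ℝ[X]) (ξ : ℝ) :
    𝓕 (fun x => (polyGaussian (polyGaussianDeriv p) x : ℂ)) ξ
      = 2 * π * Complex.I * ξ * 𝓕 (fun x => (polyGaussian p x : ℂ)) ξ := by
  have hderiv : deriv (fun x => (polyGaussian p x : ℂ))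
      = fun x => (polyGaussian (polyGaussianDeriv p) x : ℂ) :=
    funext fun x => (hasDerivAt_polyGaussian p x).ofReal_comp.deriv
  rw [← hderiv, Real.fourier_deriv (integrable_polyGaussian p).ofReal
    (fun x => (hasDerivAt_polyGaussian p x).ofReal_comp.differentiableAt)
    (hderiv ▸ (integrable_polyGaussian _).ofReal)]
  rfl

theorem fourier_ofReal_polyGaussian_one :
    𝓕 (fun x => (polyGaussian 1 x : ℂ)) = fun x => (polyGaussian 1 x : ℂ) := by
  have hgaussian : (fun x => (polyGaussian 1 x : ℂ))
      = fun x : ℝ => Complex.exp (-π * 1 * x ^ 2) := by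
    ext x
    simp [polyGaussian]
  rw [hgaussian, fourier_gaussian_pi (by simp)]
  simp

theorem fourier_ofReal_polyGaussian_iterate (n : ℕ) (ξ : ℝ) :
    𝓕 (fun x => (polyGaussian (polyGaussianDeriv^[n] 1) x : ℂ)) ξ
      = (2 * π * Complex.I * ξ) ^ n * polyGaussian 1 ξ := by
  induction n with
  | zero => simp [fourier_ofReal_polyGaussian_one]
  | succ n ih =>
    rw [Function.iterate_succ_apply', fourier_ofReal_polyGaussianDeriv, ih, pow_succ]
    ring

def selfDualQuartic : ℝ[X] := C (4 * π ^ 2) * X ^ 4 - C (6 * π) * X ^ 2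

theorem selfDualQuartic_eq : selfDualQuartic
    = C (1 / (4 * π ^ 2)) * polyGaussianDeriv^[4] 1
      + C (3 / (2 * π)) * polyGaussianDeriv^[2] 1 := by
  simp only [selfDualQuartic, Function.iterate_succ_apply', Function.iterate_zero_apply,
    polyGaussianDeriv]
  refine Polynomial.funext fun x => ?_
  simp only [map_mul, map_pow, eval_sub, eval_mul, eval_C, eval_pow, eval_X, one_div, mul_inv_rev,
    derivative_one, mul_one, zero_sub, derivative_neg, derivative_mul, derivative_C, zero_mul,
    mul_zero, add_zero, derivative_X, zero_add, mul_neg, sub_neg_eq_add, derivative_add, neg_zero,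
    derivative_sub, eval_add, eval_neg]
  field_simp
  ring

theorem fourier_ofReal_polyGaussian_selfDualQuartic :
    𝓕 (fun x => (polyGaussian selfDualQuartic x : ℂ))
      = fun x => (polyGaussian selfDualQuartic x : ℂ) := by
  have hdecomp : (fun x => (polyGaussian selfDualQuartic x : ℂ))
      = ((1 / (4 * π ^ 2) : ℝ) : ℂ) • (fun x => (polyGaussian (polyGaussianDeriv^[4] 1) x : ℂ))
        + ((3 / (2 * π) : ℝ) : ℂ) • (fun x => (polyGaussian (polyGaussianDeriv^[2] 1) x : ℂ)) := by
    rw [selfDualQuartic_eq]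
    ext x
    simp only [polyGaussian, eval_add, eval_mul, eval_C, Pi.add_apply, Pi.smul_apply, smul_eq_mul]
    push_cast
    ring
  conv_lhs => rw [hdecomp, fourier_add_of_integrable ((integrable_polyGaussian _).ofReal.smul _)
    ((integrable_polyGaussian _).ofReal.smul _), fourier_const_smul, fourier_const_smul]
  ext ξ
  simp only [Pi.add_apply, Pi.smul_apply, smul_eq_mul, fourier_ofReal_polyGaussian_iterate]
  simp only [polyGaussian, selfDualQuartic, eval_sub, eval_mul, eval_C, eval_pow, eval_X, eval_one]
  have hπ : (π : ℂ) ≠ 0 := by exact_mod_cast pi_ne_zero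
  push_cast
  field_simp
  ring_nf
  simp only [Complex.I_sq, Complex.I_pow_four]
  ring

theorem polyGaussian_selfDualQuartic_nonneg {x : ℝ} (hx : 1 ≤ |x|) :
    0 ≤ polyGaussian selfDualQuartic x := by
  have hx2 : 3 ≤ 2 * π * x ^ 2 := by
    nlinarith [pi_gt_three, one_le_sq_iff_one_le_abs x |>.mpr hx]
  have hfactor : eval x selfDualQuartic = 2 * π * x ^ 2 * (2 * π * x ^ 2 - 3) := by
    simp only [selfDualQuartic, eval_sub, eval_mul, eval_C, eval_pow, eval_X]
    ring
  rw [polyGaussian, hfactor]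
  exact mul_nonneg (mul_nonneg (by linarith) (by linarith)) (exp_pos _).le

end SelfDual

section Poisson

theorem isBigO_comp_mul_left {E : Type*} [Norm E] {f : ℝ → E} {s : ℝ}
    (hf : f =O[cocompact ℝ] (|·| ^ s)) {y : ℝ} (hy : y ≠ 0) :
    (fun x => f (y * x)) =O[cocompact ℝ] (|·| ^ s) := by
  refine (hf.comp_tendsto (tendsto_cocompact_mul_left₀ hy)).trans ?_
  refine ((isBigO_refl (|·| ^ s) _).const_mul_left (|y| ^ s)).congr_left fun x => ?_
  simp only [Function.comp_apply, abs_mul, mul_rpow (abs_nonneg y) (abs_nonneg x)]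

theorem fourier_comp_mul_left {E : Type*} [NormedAddCommGroup E] [NormedSpace ℂ E] (f : ℝ → E)
    {y : ℝ} (hy : y ≠ 0) (ξ : ℝ) : 𝓕 (fun x => f (y * x)) ξ = |y|⁻¹ • 𝓕 f (ξ / y) := by
  rw [Real.fourier_real_eq, Real.fourier_real_eq, ← abs_inv,
    ← Measure.integral_comp_mul_left _ y]
  congr 1 with v
  field_simp

theorem tsum_comp_mul_eq_tsum_fourier {f : ℝ → ℂ} (hc : Continuous f) {b : ℝ} (hb : 1 < b)
    (hf : f =O[cocompact ℝ] (|·| ^ (-b))) (hFf : 𝓕 f =O[cocompact ℝ] (|·| ^ (-b))) {y : ℝ}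
    (hy : y ≠ 0) : ∑' n : ℤ, f (y * n) = (|y|⁻¹ : ℝ) * ∑' n : ℤ, 𝓕 f (n / y) := by
  have hF : 𝓕 (fun x => f (y * x)) = fun ξ => (|y|⁻¹ : ℝ) • 𝓕 f (y⁻¹ * ξ) := by
    ext ξ
    rw [fourier_comp_mul_left f hy, div_eq_inv_mul]
  have hFdecay : 𝓕 (fun x => f (y * x)) =O[cocompact ℝ] (|·| ^ (-b)) := by
    rw [hF]
    exact (isBigO_comp_mul_left hFf (inv_ne_zero hy)).const_smul_left (|y|⁻¹ : ℝ)
  have hpoisson := Real.tsum_eq_tsum_fourier_of_rpow_decay (f := fun x => f (y * x))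
    (hc.comp (continuous_const_mul y)) hb (isBigO_comp_mul_left hf hy) hFdecay 0
  simp only [zero_add, QuotientAddGroup.mk_zero, fourier_eval_zero, mul_one] at hpoisson
  rw [hpoisson, hF, ← tsum_mul_left]
  simp_rw [div_eq_inv_mul, Complex.real_smul]

theorem tsum_int_ne_zero_comp_mul_nonneg_of_fourier_self {g : ℝ → ℝ} (hc : Continuous g) {b : ℝ}
    (hb : 1 < b) (hdecay : g =O[cocompact ℝ] (|·| ^ (-b)))
    (hself : 𝓕 (fun x => (g x : ℂ)) = fun x => (g x : ℂ)) (hzero : g 0 = 0)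
    (hpos : ∀ x, 1 ≤ |x| → 0 ≤ g x) {y : ℝ} (hy : y ≠ 0) :
    0 ≤ ∑' n : {n : ℤ // n ≠ 0}, g (y * n) := by
  have hspaced {z : ℝ} (hz : 1 ≤ |z|) : 0 ≤ ∑' n : ℤ, g (z * n) := by
    refine tsum_nonneg fun n => ?_
    rcases eq_or_ne n 0 with rfl | hn
    · simp [hzero]
    · refine hpos _ ?_
      rw [abs_mul]
      exact one_le_mul_of_one_le_of_one_le hz (by exact_mod_cast Int.one_le_abs hn)
  have hpoisson : ∑' n : ℤ, g (y * n) = |y|⁻¹ * ∑' n : ℤ, g (y⁻¹ * n) := by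
    have hdecayℂ : (fun x => (g x : ℂ)) =O[cocompact ℝ] (|·| ^ (-b)) :=
      Complex.isBigO_ofReal_left.mpr hdecay
    have h := tsum_comp_mul_eq_tsum_fourier (f := fun x => (g x : ℂ))
      (Complex.continuous_ofReal.comp hc) hb hdecayℂ (hself.symm ▸ hdecayℂ) hy
    simp_rw [hself, div_eq_inv_mul, ← Complex.ofReal_tsum, ← Complex.ofReal_mul] at h
    exact_mod_cast h
  have hpunctured : ∑' n : {n : ℤ // n ≠ 0}, g (y * n) = ∑' n : ℤ, g (y * n) :=
    tsum_subtype_eq_of_support_subset (f := fun n : ℤ => g (y * n)) (s := {n | n ≠ 0})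
      fun n hn hn0 => hn (by simp [hn0, hzero])
  rw [hpunctured]
  rcases le_or_gt 1 |y| with hy1 | hy1
  · exact hspaced hy1
  · rw [hpoisson]
    refine mul_nonneg (by positivity) (hspaced ?_)
    rw [abs_inv]
    exact one_le_inv_iff₀.mpr ⟨abs_pos.mpr hy, hy1.le⟩

end Poisson

end

theorem stmt_9 (f : ℝ → ℝ)
    (hf : ∀ x : ℝ, f x = 2 * π * x ^ 2 * (2 * π * x ^ 2 - 3) * Real.exp (-(π * x ^ 2)))
    (y : ℝ) (hy : y ≠ 0) :
    0 ≤ ∑' n : {n : ℤ // n ≠ 0}, f (y * (n : ℤ)) := by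
  obtain rfl : f = polyGaussian selfDualQuartic := funext fun x => by
    rw [hf, polyGaussian, selfDualQuartic]
    simp only [eval_sub, eval_mul, eval_C, eval_pow, eval_X]
    ring
  exact tsum_int_ne_zero_comp_mul_nonneg_of_fourier_self (continuous_polyGaussian _) one_lt_two
    (isBigO_polyGaussian _ _) fourier_ofReal_polyGaussian_selfDualQuartic
    (by simp [polyGaussian, selfDualQuartic]) (fun _ => polyGaussian_selfDualQuartic_nonneg) hy
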